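/- arXiv:1206.5389 — 3 statements merged into one kernel-verified Lean document; each statement's English description precedes it below -/
import Mathlib

section
/- Directed information is bounded by mutual information: I(X^L -> Y^L) <= I(X^L ; Y^L), and if there is no feedback (i.e., the joint distribution satisfies P(x^L || y^{L-1}) = P(x^L), meaning X_i is conditionally independent of Y^{i-1} given X^{i-1} for all i), then I(X^L -> Y^L) = I(X^L ; Y^L). -/
open scoped BigOperators

noncomputable def ent {Ω : Type*} [Fintype Ω] (p : Ω → ℝ) : ℝ :=
  -∑ ω, p ω * Real.logb 2 (p ω)

noncomputable def pmfMap {Ω γ : Type*} [Fintype Ω] [DecidableEq γ]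
    (p : Ω → ℝ) (f : Ω → γ) : γ → ℝ :=
  fun c => ∑ ω, if f ω = c then p ω else 0

noncomputable def entOf {Ω γ : Type*} [Fintype Ω] [Fintype γ] [DecidableEq γ]
    (p : Ω → ℝ) (f : Ω → γ) : ℝ :=
  ent (pmfMap p f)

noncomputable def condEnt {Ω γ δ : Type*} [Fintype Ω] [Fintype γ] [DecidableEq γ]
    [Fintype δ] [DecidableEq δ] (p : Ω → ℝ) (f : Ω → γ) (g : Ω → δ) : ℝ :=
  entOf p (fun ω => (f ω, g ω)) - entOf p g

noncomputable def mutInf {Ω γ δ : Type*} [Fintype Ω] [Fintype γ] [DecidableEq γ]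
    [Fintype δ] [DecidableEq δ] (p : Ω → ℝ) (f : Ω → γ) (g : Ω → δ) : ℝ :=
  entOf p f + entOf p g - entOf p (fun ω => (f ω, g ω))

noncomputable def condMI {Ω γ δ ρ : Type*} [Fintype Ω] [Fintype γ] [DecidableEq γ]
    [Fintype δ] [DecidableEq δ] [Fintype ρ] [DecidableEq ρ]
    (p : Ω → ℝ) (f : Ω → γ) (g : Ω → δ) (h : Ω → ρ) : ℝ :=
  condEnt p f h - condEnt p f (fun ω => (g ω, h ω))

def IsPMF {Ω : Type*} [Fintype Ω] (p : Ω → ℝ) : Prop :=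
  (∀ ω, 0 ≤ p ω) ∧ ∑ ω, p ω = 1

noncomputable def binH (x : ℝ) : ℝ :=
  -(x * Real.logb 2 x) - (1 - x) * Real.logb 2 (1 - x)

noncomputable def bern (ε : ℝ) : Bool → ℝ := fun z => if z then ε else 1 - ε

set_option linter.unusedSectionVars false
set_option linter.unusedVariables false
set_option maxHeartbeats 1000000

section Base
variable {Ω γ γ' : Type*} [Fintype Ω] [Fintype γ] [DecidableEq γ] [Fintype γ'] [DecidableEq γ']
variable (p : Ω → ℝ)

lemma pmfMap_nonneg (hp : ∀ ω, 0 ≤ p ω) (f : Ω → γ) (c : γ) : 0 ≤ pmfMap p f c :=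
  Finset.sum_nonneg fun ω _ => by split <;> simp [hp ω]

lemma le_pmfMap (hp : ∀ ω, 0 ≤ p ω) (f : Ω → γ) (ω : Ω) : p ω ≤ pmfMap p f (f ω) := by
  classical
  have := Finset.single_le_sum (f := fun ω' => if f ω' = f ω then p ω' else 0)
    (fun ω' _ => by split <;> simp [hp ω']) (Finset.mem_univ ω)
  simpa [pmfMap] using this

lemma pmfMap_sum (f : Ω → γ) : ∑ c, pmfMap p f c = ∑ ω, p ω := by
  unfold pmfMap
  rw [Finset.sum_comm]
  exact Finset.sum_congr rfl fun ω _ => by simp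

lemma sum_pmfMap_mul (f : Ω → γ) (φ : γ → ℝ) :
    ∑ c, pmfMap p f c * φ c = ∑ ω, p ω * φ (f ω) := by
  unfold pmfMap
  simp only [Finset.sum_mul, ite_mul, zero_mul]
  rw [Finset.sum_comm]
  exact Finset.sum_congr rfl fun ω _ => by simp

lemma entOf_eq (f : Ω → γ) :
    entOf p f = -∑ ω, p ω * Real.logb 2 (pmfMap p f (f ω)) := by
  unfold entOf ent
  rw [sum_pmfMap_mul]

lemma pmfMap_congr {f : Ω → γ} {f' : Ω → γ'} {x : γ} {x' : γ'}
    (h : ∀ ω, f ω = x ↔ f' ω = x') : pmfMap p f x = pmfMap p f' x' :=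
  Finset.sum_congr rfl fun ω _ => if_congr (h ω) rfl rfl

lemma entOf_congr {f : Ω → γ} {f' : Ω → γ'}
    (h : ∀ ω ω', f ω = f ω' ↔ f' ω = f' ω') : entOf p f = entOf p f' := by
  rw [entOf_eq, entOf_eq]
  congr 1
  refine Finset.sum_congr rfl fun ω _ => ?_
  rw [pmfMap_congr p (fun ω' => h ω' ω)]

lemma entOf_subsingleton [Subsingleton γ] (hp : ∀ ω, 0 ≤ p ω) (hs : ∑ ω, p ω = 1)
    (f : Ω → γ) : entOf p f = 0 := by
  rw [entOf_eq]
  have : ∀ ω, pmfMap p f (f ω) = 1 := fun ω => by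
    unfold pmfMap
    rw [← hs]
    exact Finset.sum_congr rfl fun ω' _ => by simp [Subsingleton.elim (f ω') (f ω)]
  simp [this]

end Base

section M
variable {Ω γ δ ρ : Type*} [Fintype Ω] [Fintype γ] [DecidableEq γ]
    [Fintype δ] [DecidableEq δ] [Fintype ρ] [DecidableEq ρ] (p : Ω → ℝ)

lemma pmfMap_marg (f : Ω → γ) (h : Ω → ρ) (c : ρ) :
    ∑ a, pmfMap p (fun ω => (f ω, h ω)) (a, c) = pmfMap p h c := by
  unfold pmfMap
  rw [Finset.sum_comm]
  refine Finset.sum_congr rfl fun ω _ => ?_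
  by_cases hc : h ω = c <;> simp [Prod.ext_iff, hc]

end M

section CMI
variable {Ω γ δ ρ : Type*} [Fintype Ω] [Fintype γ] [DecidableEq γ]
    [Fintype δ] [DecidableEq δ] [Fintype ρ] [DecidableEq ρ]
variable (p : Ω → ℝ) (f : Ω → γ) (g : Ω → δ) (h : Ω → ρ)

lemma condMI_key :
    condMI p f g h = ∑ ω, p ω *
      (Real.logb 2 (pmfMap p (fun ω => (f ω, (g ω, h ω))) (f ω, (g ω, h ω)))
       + Real.logb 2 (pmfMap p h (h ω))
       - Real.logb 2 (pmfMap p (fun ω => (f ω, h ω)) (f ω, h ω))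
       - Real.logb 2 (pmfMap p (fun ω => (g ω, h ω)) (g ω, h ω))) := by
  unfold condMI condEnt
  rw [entOf_eq, entOf_eq, entOf_eq, entOf_eq]
  simp only [mul_add, mul_sub, Finset.sum_add_distrib, Finset.sum_sub_distrib]
  ring

lemma condMI_sum_le (hp : IsPMF p) :
    ∑ ω, p ω * pmfMap p (fun ω => (f ω, h ω)) (f ω, h ω)
        * pmfMap p (fun ω => (g ω, h ω)) (g ω, h ω)
        / (pmfMap p (fun ω => (f ω, (g ω, h ω))) (f ω, (g ω, h ω)) * pmfMap p h (h ω)) ≤ 1 := by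
  classical
  set u : Ω → γ × (δ × ρ) := fun ω => (f ω, (g ω, h ω)) with hu
  set φ : γ × (δ × ρ) → ℝ := fun x =>
    pmfMap p (fun ω => (f ω, h ω)) (x.1, x.2.2) * pmfMap p (fun ω => (g ω, h ω)) x.2
      / (pmfMap p u x * pmfMap p h x.2.2) with hφ
  have h1 : ∑ ω, p ω * pmfMap p (fun ω => (f ω, h ω)) (f ω, h ω)
        * pmfMap p (fun ω => (g ω, h ω)) (g ω, h ω)
        / (pmfMap p (fun ω => (f ω, (g ω, h ω))) (f ω, (g ω, h ω)) * pmfMap p h (h ω))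
      = ∑ x, pmfMap p u x * φ x := by
    rw [sum_pmfMap_mul]
    refine Finset.sum_congr rfl fun ω _ => ?_
    simp only [hφ, hu]
    ring
  rw [h1]
  have h2 : ∑ x, pmfMap p u x * φ x ≤
      ∑ x : γ × (δ × ρ), pmfMap p (fun ω => (f ω, h ω)) (x.1, x.2.2)
        * pmfMap p (fun ω => (g ω, h ω)) x.2 / pmfMap p h x.2.2 := by
    refine Finset.sum_le_sum fun x _ => ?_
    have ha := pmfMap_nonneg p hp.1 u x
    have hb := pmfMap_nonneg p hp.1 (fun ω => (f ω, h ω)) (x.1, x.2.2)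
    have hc := pmfMap_nonneg p hp.1 (fun ω => (g ω, h ω)) x.2
    have hd := pmfMap_nonneg p hp.1 h x.2.2
    simp only [hφ]
    rcases ha.eq_or_lt with ha0 | ha0
    · rw [← ha0]; simp [div_nonneg (mul_nonneg hb hc) hd]
    · rcases hd.eq_or_lt with hd0 | hd0
      · rw [← hd0]; simp
      · refine le_of_eq ?_
        field_simp
  refine h2.trans ?_
  have h3 : ∑ x : γ × (δ × ρ), pmfMap p (fun ω => (f ω, h ω)) (x.1, x.2.2)
        * pmfMap p (fun ω => (g ω, h ω)) x.2 / pmfMap p h x.2.2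
      = ∑ c : ρ, pmfMap p h c * pmfMap p h c / pmfMap p h c := by
    rw [Fintype.sum_prod_type]
    have inner : ∀ a : γ, ∑ y : δ × ρ, pmfMap p (fun ω => (f ω, h ω)) (a, y.2)
        * pmfMap p (fun ω => (g ω, h ω)) y / pmfMap p h y.2
        = ∑ c : ρ, ∑ b : δ, pmfMap p (fun ω => (f ω, h ω)) (a, c)
            * pmfMap p (fun ω => (g ω, h ω)) (b, c) / pmfMap p h c := by
      intro a
      rw [Fintype.sum_prod_type]
      exact Finset.sum_comm
    simp only [inner]
    rw [Finset.sum_comm]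
    refine Finset.sum_congr rfl fun c _ => ?_
    have : ∀ a : γ, ∑ b : δ, pmfMap p (fun ω => (f ω, h ω)) (a, c)
        * pmfMap p (fun ω => (g ω, h ω)) (b, c) / pmfMap p h c
        = pmfMap p (fun ω => (f ω, h ω)) (a, c) * pmfMap p h c / pmfMap p h c := by
      intro a
      rw [← pmfMap_marg p g h c, Finset.mul_sum, Finset.sum_div]
    simp only [this]
    rw [← Finset.sum_div, ← Finset.sum_mul, pmfMap_marg p f h c]
  rw [h3]
  have h4 : ∑ c : ρ, pmfMap p h c * pmfMap p h c / pmfMap p h c ≤ ∑ c : ρ, pmfMap p h c := by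
    refine Finset.sum_le_sum fun c _ => ?_
    rcases (pmfMap_nonneg p hp.1 h c).eq_or_lt with h0 | h0
    · rw [← h0]; simp
    · refine le_of_eq ?_
      field_simp
  refine h4.trans ?_
  rw [pmfMap_sum, hp.2]

lemma condMI_nonneg (hp : IsPMF p) : 0 ≤ condMI p f g h := by
  rw [condMI_key]
  have hlog2 : (0:ℝ) < Real.log 2 := Real.log_pos one_lt_two
  have hbound : ∀ ω ∈ Finset.univ,
      (p ω - p ω * pmfMap p (fun ω => (f ω, h ω)) (f ω, h ω)
        * pmfMap p (fun ω => (g ω, h ω)) (g ω, h ω)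
        / (pmfMap p (fun ω => (f ω, (g ω, h ω))) (f ω, (g ω, h ω)) * pmfMap p h (h ω)))
          / Real.log 2
      ≤ p ω * (Real.logb 2 (pmfMap p (fun ω => (f ω, (g ω, h ω))) (f ω, (g ω, h ω)))
          + Real.logb 2 (pmfMap p h (h ω))
          - Real.logb 2 (pmfMap p (fun ω => (f ω, h ω)) (f ω, h ω))
          - Real.logb 2 (pmfMap p (fun ω => (g ω, h ω)) (g ω, h ω))) := by
    intro ω _
    rcases (hp.1 ω).eq_or_lt with h0 | h0
    · rw [← h0]; simp
    · set A := pmfMap p (fun ω => (f ω, (g ω, h ω))) (f ω, (g ω, h ω)) with hA'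
      set B := pmfMap p h (h ω) with hB'
      set C := pmfMap p (fun ω => (f ω, h ω)) (f ω, h ω) with hC'
      set D := pmfMap p (fun ω => (g ω, h ω)) (g ω, h ω) with hD'
      have hA : 0 < A := lt_of_lt_of_le h0 (le_pmfMap p hp.1 (fun ω => (f ω, (g ω, h ω))) ω)
      have hB : 0 < B := lt_of_lt_of_le h0 (le_pmfMap p hp.1 h ω)
      have hC : 0 < C := lt_of_lt_of_le h0 (le_pmfMap p hp.1 (fun ω => (f ω, h ω)) ω)
      have hD : 0 < D := lt_of_lt_of_le h0 (le_pmfMap p hp.1 (fun ω => (g ω, h ω)) ω)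
      have key2 : 1 - C * D / (A * B) ≤ Real.log A + Real.log B - Real.log C - Real.log D := by
        have hlr := Real.log_le_sub_one_of_pos (show (0:ℝ) < C * D / (A * B) by positivity)
        rw [Real.log_div (by positivity) (by positivity),
            Real.log_mul hC.ne' hD.ne', Real.log_mul hA.ne' hB.ne'] at hlr
        linarith
      have hrw : p ω * (Real.logb 2 A + Real.logb 2 B - Real.logb 2 C - Real.logb 2 D)
          = p ω * (Real.log A + Real.log B - Real.log C - Real.log D) / Real.log 2 := by
        simp only [Real.logb]; ring
      rw [hrw]
      have hmul : p ω * (1 - C * D / (A * B))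
          ≤ p ω * (Real.log A + Real.log B - Real.log C - Real.log D) :=
        mul_le_mul_of_nonneg_left key2 h0.le
      have hineq := (div_le_div_iff_of_pos_right hlog2).mpr hmul
      refine le_trans (le_of_eq ?_) hineq
      ring
  have hsum := Finset.sum_le_sum hbound
  refine le_trans ?_ hsum
  rw [← Finset.sum_div, Finset.sum_sub_distrib, hp.2]
  have := condMI_sum_le p f g h hp
  have : 0 ≤ 1 - ∑ ω, p ω * pmfMap p (fun ω => (f ω, h ω)) (f ω, h ω)
        * pmfMap p (fun ω => (g ω, h ω)) (g ω, h ω)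
        / (pmfMap p (fun ω => (f ω, (g ω, h ω))) (f ω, (g ω, h ω)) * pmfMap p h (h ω)) := by
    linarith
  positivity

lemma condMI_eq_zero (hp : IsPMF p)
    (hind : ∀ ω, 0 < p ω →
      pmfMap p (fun ω => (f ω, (g ω, h ω))) (f ω, (g ω, h ω)) * pmfMap p h (h ω)
        = pmfMap p (fun ω => (f ω, h ω)) (f ω, h ω)
          * pmfMap p (fun ω => (g ω, h ω)) (g ω, h ω)) :
    condMI p f g h = 0 := by
  rw [condMI_key]
  refine Finset.sum_eq_zero fun ω _ => ?_
  rcases (hp.1 ω).eq_or_lt with h0 | h0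
  · rw [← h0]; ring
  · have hA : 0 < pmfMap p (fun ω => (f ω, (g ω, h ω))) (f ω, (g ω, h ω)) :=
      lt_of_lt_of_le h0 (le_pmfMap p hp.1 (fun ω => (f ω, (g ω, h ω))) ω)
    have hB : 0 < pmfMap p h (h ω) := lt_of_lt_of_le h0 (le_pmfMap p hp.1 h ω)
    have hC : 0 < pmfMap p (fun ω => (f ω, h ω)) (f ω, h ω) :=
      lt_of_lt_of_le h0 (le_pmfMap p hp.1 (fun ω => (f ω, h ω)) ω)
    have hD : 0 < pmfMap p (fun ω => (g ω, h ω)) (g ω, h ω) :=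
      lt_of_lt_of_le h0 (le_pmfMap p hp.1 (fun ω => (g ω, h ω)) ω)
    have hz : Real.logb 2 (pmfMap p (fun ω => (f ω, (g ω, h ω))) (f ω, (g ω, h ω)))
        + Real.logb 2 (pmfMap p h (h ω))
        - Real.logb 2 (pmfMap p (fun ω => (f ω, h ω)) (f ω, h ω))
        - Real.logb 2 (pmfMap p (fun ω => (g ω, h ω)) (g ω, h ω)) = 0 := by
      have hm := hind ω h0
      rw [sub_sub, ← Real.logb_mul hA.ne' hB.ne', ← Real.logb_mul hC.ne' hD.ne', hm]
      ring
    rw [hz, mul_zero]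

end CMI

section Pre
variable {α : Type*} {L : ℕ}

def padA (n : ℕ) (v : Fin L → α) : Fin n → Option α :=
  fun j => if h : (j : ℕ) < L then some (v ⟨j, h⟩) else none

lemma padA_eq_iff (n : ℕ) (v w : Fin L → α) :
    padA n v = padA n w ↔ ∀ k, ∀ hk : k < L, k < n → v ⟨k, hk⟩ = w ⟨k, hk⟩ := by
  constructor
  · intro h k hk hkn
    have := congrFun h ⟨k, hkn⟩
    simp only [padA, dif_pos hk] at this
    exact Option.some_injective _ this
  · intro h
    funext j
    by_cases hj : (j : ℕ) < L
    · simp only [padA, dif_pos hj]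
      exact congrArg some (h j hj j.isLt)
    · simp only [padA, dif_neg hj]

lemma castLE_eq_iff {m : ℕ} (hm : m ≤ L) (v w : Fin L → α) :
    (fun j : Fin m => v (Fin.castLE hm j)) = (fun j : Fin m => w (Fin.castLE hm j))
      ↔ ∀ k, ∀ hk : k < L, k < m → v ⟨k, hk⟩ = w ⟨k, hk⟩ := by
  constructor
  · intro h k hk hkm
    exact congrFun h ⟨k, hkm⟩
  · intro h
    funext j
    exact h j.val (lt_of_lt_of_le j.isLt hm) j.isLt

lemma peq_succ_iff {n : ℕ} (hn : n < L) (v w : Fin L → α) :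
    (∀ k, ∀ hk : k < L, k < n + 1 → v ⟨k, hk⟩ = w ⟨k, hk⟩)
      ↔ v ⟨n, hn⟩ = w ⟨n, hn⟩ ∧ ∀ k, ∀ hk : k < L, k < n → v ⟨k, hk⟩ = w ⟨k, hk⟩ := by
  constructor
  · exact fun h => ⟨h n hn (Nat.lt_succ_self n),
      fun k hk hkn => h k hk (hkn.trans (Nat.lt_succ_self n))⟩
  · rintro ⟨h1, h2⟩ k hk hkn
    rcases Nat.lt_succ_iff_lt_or_eq.mp hkn with h | h
    · exact h2 k hk h
    · subst h; exact h1

lemma peq_all_iff (v w : Fin L → α) :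
    (∀ k, ∀ hk : k < L, k < L → v ⟨k, hk⟩ = w ⟨k, hk⟩) ↔ v = w :=
  ⟨fun h => funext fun j => h j.val j.isLt j.isLt, fun h k hk _ => by rw [h]⟩

end Pre

variable {α β : Type} [Fintype α] [DecidableEq α] [Fintype β] [DecidableEq β]

/-- Directed information `I(X^L → Y^L) = H(Y^L) - ∑_i H(Y_i | Y^{i-1}, X^i)` (in bits). -/
noncomputable def dirInfo (L : ℕ) (p : (Fin L → α) × (Fin L → β) → ℝ) : ℝ :=
  entOf p Prod.snd - ∑ i : Fin L, condEnt p (fun ω => ω.2 i)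
    (fun ω => ((fun j : Fin i.val => ω.2 (Fin.castLE i.isLt.le j)),
               (fun j : Fin (i.val + 1) => ω.1 (Fin.castLE i.isLt j))))


lemma main_identity (L : ℕ) (p : (Fin L → α) × (Fin L → β) → ℝ) (hp : IsPMF p) :
    mutInf p Prod.fst Prod.snd - dirInfo L p
      = ∑ i : Fin L, condMI p (fun ω => ω.1 i)
          (fun ω => (fun j : Fin i.val => ω.2 (Fin.castLE i.isLt.le j)))
          (fun ω => (fun j : Fin i.val => ω.1 (Fin.castLE i.isLt.le j))) := by
  classical
  haveI h1 : Subsingleton (Fin 0 → Option α) := ⟨fun a b => funext fun j => j.elim0⟩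
  haveI h2 : Subsingleton (Fin 0 → Option β) := ⟨fun a b => funext fun j => j.elim0⟩
  haveI : Subsingleton ((Fin 0 → Option α) × (Fin 0 → Option β)) :=
    ⟨fun a b => Prod.ext (Subsingleton.elim _ _) (Subsingleton.elim _ _)⟩
  set F : ℕ → ℝ := fun n => entOf p (fun ω => padA n ω.1) with hF
  set G : ℕ → ℝ := fun n => entOf p (fun ω => (padA n ω.1, padA n ω.2)) with hG
  have hF0 : F 0 = 0 := entOf_subsingleton p hp.1 hp.2 _
  have hG0 : G 0 = 0 := entOf_subsingleton p hp.1 hp.2 _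
  have hFL : F L = entOf p Prod.fst := by
    refine entOf_congr p fun ω ω' => ?_
    rw [padA_eq_iff, peq_all_iff]
  have hGL : G L = entOf p (fun ω => (Prod.fst ω, Prod.snd ω)) := by
    refine entOf_congr p fun ω ω' => ?_
    simp only [Prod.mk.injEq, padA_eq_iff, peq_all_iff]
  have htF : ∑ i : Fin L, (F (i.val + 1) - F i.val) = F L := by
    rw [Fin.sum_univ_eq_sum_range (fun n => F (n + 1) - F n) L, Finset.sum_range_sub, hF0,
      sub_zero]
  have htG : ∑ i : Fin L, (G (i.val + 1) - G i.val) = G L := by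
    rw [Fin.sum_univ_eq_sum_range (fun n => G (n + 1) - G n) L, Finset.sum_range_sub, hG0,
      sub_zero]
  have keyi : ∀ i : Fin L,
      (F (i.val + 1) - F i.val) - (G (i.val + 1) - G i.val)
        + condEnt p (fun ω => ω.2 i)
          (fun ω => ((fun j : Fin i.val => ω.2 (Fin.castLE i.isLt.le j)),
               (fun j : Fin (i.val + 1) => ω.1 (Fin.castLE i.isLt j))))
      = condMI p (fun ω => ω.1 i)
          (fun ω => (fun j : Fin i.val => ω.2 (Fin.castLE i.isLt.le j)))
          (fun ω => (fun j : Fin i.val => ω.1 (Fin.castLE i.isLt.le j))) := by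
    intro i
    have e1 : F (i.val + 1)
        = entOf p (fun ω => (ω.1 i, fun j : Fin i.val => ω.1 (Fin.castLE i.isLt.le j))) := by
      refine entOf_congr p fun ω ω' => ?_
      simp only [hF, padA_eq_iff, peq_succ_iff i.isLt, Prod.mk.injEq,
        castLE_eq_iff i.isLt.le, Fin.eta]
    have e2 : F i.val
        = entOf p (fun ω => (fun j : Fin i.val => ω.1 (Fin.castLE i.isLt.le j))) := by
      refine entOf_congr p fun ω ω' => ?_
      rw [padA_eq_iff, castLE_eq_iff i.isLt.le]
    have e3 : G (i.val + 1) = entOf p (fun ω => (ω.2 i,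
        ((fun j : Fin i.val => ω.2 (Fin.castLE i.isLt.le j)),
         (fun j : Fin (i.val + 1) => ω.1 (Fin.castLE i.isLt j))))) := by
      refine entOf_congr p fun ω ω' => ?_
      simp only [Prod.mk.injEq, padA_eq_iff, castLE_eq_iff i.isLt,
        castLE_eq_iff i.isLt.le, peq_succ_iff i.isLt, Fin.eta]
      tauto
    have e4 : G i.val
        = entOf p (fun ω => ((fun j : Fin i.val => ω.2 (Fin.castLE i.isLt.le j)),
             (fun j : Fin i.val => ω.1 (Fin.castLE i.isLt.le j)))) := by
      refine entOf_congr p fun ω ω' => ?_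
      simp only [Prod.mk.injEq, padA_eq_iff, castLE_eq_iff i.isLt.le]
      tauto
    have e5 : entOf p (fun ω => ((fun j : Fin i.val => ω.2 (Fin.castLE i.isLt.le j)),
         (fun j : Fin (i.val + 1) => ω.1 (Fin.castLE i.isLt j))))
        = entOf p (fun ω => (ω.1 i,
            ((fun j : Fin i.val => ω.2 (Fin.castLE i.isLt.le j)),
             (fun j : Fin i.val => ω.1 (Fin.castLE i.isLt.le j))))) := by
      refine entOf_congr p fun ω ω' => ?_
      simp only [Prod.mk.injEq, castLE_eq_iff i.isLt, castLE_eq_iff i.isLt.le,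
        peq_succ_iff i.isLt, Fin.eta]
      tauto
    simp only [condMI, condEnt]
    rw [e1, e2, e3, e4, e5]
    ring
  have hsum : ∑ i : Fin L,
      ((F (i.val + 1) - F i.val) - (G (i.val + 1) - G i.val)
        + condEnt p (fun ω => ω.2 i)
          (fun ω => ((fun j : Fin i.val => ω.2 (Fin.castLE i.isLt.le j)),
               (fun j : Fin (i.val + 1) => ω.1 (Fin.castLE i.isLt j)))))
      = ∑ i : Fin L, condMI p (fun ω => ω.1 i)
          (fun ω => (fun j : Fin i.val => ω.2 (Fin.castLE i.isLt.le j)))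
          (fun ω => (fun j : Fin i.val => ω.1 (Fin.castLE i.isLt.le j))) :=
    Finset.sum_congr rfl fun i _ => keyi i
  rw [← hsum, Finset.sum_add_distrib, Finset.sum_sub_distrib, htF, htG, hFL, hGL, mutInf,
    dirInfo]
  ring

/-- Directed information is bounded by mutual information, with equality when there is no
feedback, i.e. when `X_i` is conditionally independent of `Y^{i-1}` given `X^{i-1}` for all `i`. -/
theorem stmt2 (L : ℕ) (p : (Fin L → α) × (Fin L → β) → ℝ) (hp : IsPMF p) :
    dirInfo L p ≤ mutInf p Prod.fst Prod.snd ∧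
    ((∀ i : Fin L, ∀ a : α, ∀ xp : Fin i.val → α, ∀ yp : Fin i.val → β,
        pmfMap p (fun ω => (ω.1 i, (fun j : Fin i.val => ω.1 (Fin.castLE i.isLt.le j)),
              (fun j : Fin i.val => ω.2 (Fin.castLE i.isLt.le j)))) (a, xp, yp)
          * pmfMap p (fun ω => (fun j : Fin i.val => ω.1 (Fin.castLE i.isLt.le j))) xp
        = pmfMap p (fun ω => (ω.1 i,
              (fun j : Fin i.val => ω.1 (Fin.castLE i.isLt.le j)))) (a, xp)
          * pmfMap p (fun ω => ((fun j : Fin i.val => ω.2 (Fin.castLE i.isLt.le j)),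
              (fun j : Fin i.val => ω.1 (Fin.castLE i.isLt.le j)))) (yp, xp)) →
      dirInfo L p = mutInf p Prod.fst Prod.snd) := by
  have hid := main_identity L p hp
  have hnn : ∀ i : Fin L, 0 ≤ condMI p (fun ω => ω.1 i)
      (fun ω => (fun j : Fin i.val => ω.2 (Fin.castLE i.isLt.le j)))
      (fun ω => (fun j : Fin i.val => ω.1 (Fin.castLE i.isLt.le j))) :=
    fun i => condMI_nonneg p _ _ _ hp
  constructor
  · have : 0 ≤ ∑ i : Fin L, condMI p (fun ω => ω.1 i)
        (fun ω => (fun j : Fin i.val => ω.2 (Fin.castLE i.isLt.le j)))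
        (fun ω => (fun j : Fin i.val => ω.1 (Fin.castLE i.isLt.le j))) :=
      Finset.sum_nonneg fun i _ => hnn i
    linarith
  · intro hyp
    have hz : ∀ i : Fin L, condMI p (fun ω => ω.1 i)
        (fun ω => (fun j : Fin i.val => ω.2 (Fin.castLE i.isLt.le j)))
        (fun ω => (fun j : Fin i.val => ω.1 (Fin.castLE i.isLt.le j))) = 0 := by
      intro i
      refine condMI_eq_zero p _ _ _ hp ?_
      intro ω hω
      have key := hyp i (ω.1 i) (fun j => ω.1 (Fin.castLE i.isLt.le j))
        (fun j => ω.2 (Fin.castLE i.isLt.le j))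
      have hconv : pmfMap p (fun ω' => (ω'.1 i,
            (fun j : Fin i.val => ω'.1 (Fin.castLE i.isLt.le j)),
            (fun j : Fin i.val => ω'.2 (Fin.castLE i.isLt.le j))))
          (ω.1 i, (fun j : Fin i.val => ω.1 (Fin.castLE i.isLt.le j)),
            (fun j : Fin i.val => ω.2 (Fin.castLE i.isLt.le j)))
        = pmfMap p (fun ω' => (ω'.1 i,
            ((fun j : Fin i.val => ω'.2 (Fin.castLE i.isLt.le j)),
             (fun j : Fin i.val => ω'.1 (Fin.castLE i.isLt.le j)))))
          (ω.1 i, ((fun j : Fin i.val => ω.2 (Fin.castLE i.isLt.le j)),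
            (fun j : Fin i.val => ω.1 (Fin.castLE i.isLt.le j)))) := by
        refine pmfMap_congr p fun ω' => ?_
        simp only [Prod.mk.injEq]
        tauto
      rw [hconv] at key
      exact key
    have : ∑ i : Fin L, condMI p (fun ω => ω.1 i)
        (fun ω => (fun j : Fin i.val => ω.2 (Fin.castLE i.isLt.le j)))
        (fun ω => (fun j : Fin i.val => ω.1 (Fin.castLE i.isLt.le j))) = 0 :=
      Finset.sum_eq_zero fun i _ => hz i
    linarith
end

section
/- For the binary channel with L=2, Y_1 = X_1, feedback tilde{Y}_1 = Z, and Y_2 = X_2 XOR Z where Z is Bernoulli(epsilon): without feedback the maximum of I(X^2; Y^2) equals 2 - H_2(epsilon), whereas with causal feedback of Z the strategy X_2 = X_2' XOR Z (with X_1, X_2' independent uniform bits) achieves I(A^2; Y^2) = 2. Hence in-block feedback strictly increases capacity whenever 0 < epsilon < 1. -/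
open scoped BigOperators

/-- No-feedback joint law of `((X₁,X₂),(Y₁,Y₂))`:  inputs `q` independent of `Z`,
`Y₁ = X₁`, `Y₂ = X₂ ⊕ Z`, `Z ~ Bernoulli(ε)`. -/
noncomputable def pNF (ε : ℝ) (q : Bool × Bool → ℝ) : (Bool × Bool) × (Bool × Bool) → ℝ :=
  fun ω => q ω.1 * (if ω.2.1 = ω.1.1 then 1 else 0) *
    (∑ z : Bool, bern ε z * (if ω.2.2 = xor ω.1.2 z then 1 else 0))

/-- Feedback strategy law:  `A² = (X₁, X₂')` uniform, `Z ~ Bernoulli(ε)` independent. -/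
noncomputable def pFB (ε : ℝ) : (Bool × Bool) × Bool → ℝ :=
  fun ω => (1/4 : ℝ) * bern ε ω.2

section Aux

lemma logb_quarter' : Real.logb 2 (1/4) = -2 := by
  rw [show (1/4:ℝ) = (2^(2:ℕ))⁻¹ by norm_num, Real.logb_inv, Real.logb_pow,
    Real.logb_self_eq_one] <;> norm_num

lemma mul_logb_mul' (x y : ℝ) (hx : 0 ≤ x) (hy : 0 ≤ y) :
    x * y * Real.logb 2 (x * y) = x * y * Real.logb 2 x + x * y * Real.logb 2 y := by
  rcases hx.eq_or_lt with h | h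
  · simp [← h]
  rcases hy.eq_or_lt with h' | h'
  · simp [← h']
  rw [Real.logb_mul h.ne' h'.ne']; ring

/-- entropy of a pmf on a 4-element type is at most 2. -/
lemma ent_le_two' {γ : Type*} [Fintype γ] (r : γ → ℝ)
    (h0 : ∀ c, 0 ≤ r c) (h1 : ∑ c, r c = 1) (hcard : Fintype.card γ = 4) :
    (-∑ c, r c * Real.logb 2 (r c)) ≤ 2 := by
  have hlog2 : (0:ℝ) < Real.log 2 := Real.log_pos (by norm_num)
  have key : ∀ c, r c * (-Real.log 4) + (r c - 1/4) ≤ r c * Real.log (r c) := by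
    intro c
    rcases (h0 c).eq_or_lt with h | h
    · rw [← h]; norm_num
    · have h4 : (0:ℝ) < 4 * r c := by linarith
      have := Real.log_le_sub_one_of_pos (show (0:ℝ) < (4 * r c)⁻¹ by positivity)
      rw [Real.log_inv] at this
      have hlog : Real.log (4 * r c) = Real.log 4 + Real.log (r c) :=
        Real.log_mul (by norm_num) h.ne'
      have hinv : (4 * r c)⁻¹ = 1 / (4 * r c) := by ring
      rw [hinv, hlog] at this
      have h2 : r c * (-(Real.log 4 + Real.log (r c))) ≤ r c * (1 / (4 * r c) - 1) :=
        mul_le_mul_of_nonneg_left this (le_of_lt h)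
      have h3 : r c * (1 / (4 * r c) - 1) = 1/4 - r c := by
        field_simp
      nlinarith [h2, h3]
  have hsum : ∑ c, (r c * (-Real.log 4) + (r c - 1/4)) ≤ ∑ c, r c * Real.log (r c) :=
    Finset.sum_le_sum (fun c _ => key c)
  have hL : ∑ c, (r c * (-Real.log 4) + (r c - 1/4)) = -Real.log 4 := by
    rw [Finset.sum_add_distrib, ← Finset.sum_mul, h1, Finset.sum_sub_distrib, h1]
    simp [Finset.card_univ, hcard]
  rw [hL] at hsum
  have hlog4 : Real.log 4 = 2 * Real.log 2 := by
    rw [show (4:ℝ) = 2^(2:ℕ) by norm_num, Real.log_pow]; push_cast; ring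
  have hrw : -∑ c, r c * Real.logb 2 (r c) = (-∑ c, r c * Real.log (r c)) / Real.log 2 := by
    rw [eq_div_iff hlog2.ne', neg_mul, Finset.sum_mul]
    congr 1
    apply Finset.sum_congr rfl
    intro c _
    rw [Real.logb]; field_simp
  rw [hrw, div_le_iff₀ hlog2]
  nlinarith [hsum, hlog4]

/-- value of the no-feedback mutual information: `H(Y²) - H₂(ε)`. -/
lemma NF_value (ε : ℝ) (hε0 : 0 ≤ ε) (hε1 : ε ≤ 1) (q : Bool × Bool → ℝ) (hq : IsPMF q) :
    mutInf (pNF ε q) Prod.fst Prod.snd =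
      (-∑ c : Bool × Bool, pmfMap (pNF ε q) Prod.snd c *
        Real.logb 2 (pmfMap (pNF ε q) Prod.snd c)) - binH ε := by
  simp only [mutInf, entOf, ent, pmfMap, pNF, bern, binH, Fintype.sum_prod_type,
    Fintype.sum_bool]
  norm_num [Prod.ext_iff]
  have hsum : q (false,false) + q (false,true) + q (true,false) + q (true,true) = 1 := by
    have := hq.2
    simp [Fintype.sum_prod_type, Fintype.sum_bool] at this; linarith
  have hw : (0:ℝ) ≤ 1 - ε := by linarith
  have A : ∀ x : Bool × Bool, q x * ε * Real.logb 2 (q x * ε)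
      = q x * ε * Real.logb 2 (q x) + q x * ε * Real.logb 2 ε :=
    fun x => mul_logb_mul' _ _ (hq.1 x) hε0
  have B : ∀ x : Bool × Bool, q x * (1 - ε) * Real.logb 2 (q x * (1 - ε))
      = q x * (1 - ε) * Real.logb 2 (q x) + q x * (1 - ε) * Real.logb 2 (1 - ε) :=
    fun x => mul_logb_mul' _ _ (hq.1 x) hw
  simp only [A, B, show ∀ r : ℝ, r * ε + r * (1 - ε) = r from fun r => by ring,
    show ∀ r : ℝ, r * (1 - ε) + r * ε = r from fun r => by ring]
  linear_combination (ε * Real.logb 2 ε + (1 - ε) * Real.logb 2 (1 - ε)) * hsum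

end Aux

/-- For the `L = 2` channel `Y₁ = X₁`, `Ỹ₁ = Z`, `Y₂ = X₂ ⊕ Z`:  without feedback
`max I(X²;Y²) = 2 - H₂(ε)`; the feedback strategy `X₂ = X₂' ⊕ Z` achieves
`I(A²;Y²) = 2`; hence feedback strictly increases capacity when `0 < ε < 1`. -/

theorem stmt7 (ε : ℝ) (hε : ε ∈ Set.Icc (0:ℝ) 1) :
    IsGreatest {v : ℝ | ∃ q : Bool × Bool → ℝ, IsPMF q ∧
        v = mutInf (pNF ε q) Prod.fst Prod.snd} (2 - binH ε) ∧
    mutInf (pFB ε) (fun ω => ω.1) (fun ω => (ω.1.1, xor (xor ω.1.2 ω.2) ω.2)) = 2 ∧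
    (0 < ε → ε < 1 → 2 - binH ε < 2) := by
  obtain ⟨hε0, hε1⟩ := hε
  have hw : (0:ℝ) ≤ 1 - ε := by linarith
  refine ⟨⟨?_, ?_⟩, ?_, ?_⟩
  · -- membership: uniform inputs achieve 2 - binH ε
    refine ⟨fun _ => 1/4, ⟨fun _ => by norm_num, by
      simp [Fintype.sum_prod_type, Fintype.sum_bool] <;> norm_num⟩, ?_⟩
    rw [NF_value ε hε0 hε1 _ ⟨fun _ => by norm_num, by
      simp [Fintype.sum_prod_type, Fintype.sum_bool] <;> norm_num⟩]
    have hm : ∀ c : Bool × Bool, pmfMap (pNF ε (fun _ => 1/4)) Prod.snd c = 1/4 := by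
      intro c
      simp only [pmfMap, pNF, bern, Fintype.sum_prod_type, Fintype.sum_bool]
      rcases c with ⟨c1, c2⟩
      cases c1 <;> cases c2 <;> norm_num [Prod.ext_iff] <;> try ring
    simp only [hm]
    rw [show (∑ _c : Bool × Bool, (1/4 : ℝ) * Real.logb 2 (1/4)) =
        Real.logb 2 (1/4) from by
      simp [Fintype.sum_prod_type, Fintype.sum_bool] <;> try ring]
    rw [logb_quarter']
    ring
  · -- upper bound
    rintro v ⟨q, hq, rfl⟩
    rw [NF_value ε hε0 hε1 q hq]
    have h1 : ∀ c, 0 ≤ pmfMap (pNF ε q) Prod.snd c := by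
      intro c
      refine Finset.sum_nonneg fun ω _ => ?_
      split
      · refine mul_nonneg (mul_nonneg (hq.1 _) ?_) ?_
        · split <;> norm_num
        · refine Finset.sum_nonneg fun z _ => mul_nonneg ?_ ?_
          · cases z <;> simp [bern] <;> linarith
          · split <;> norm_num
      · exact le_refl 0
    have h2 : ∑ c, pmfMap (pNF ε q) Prod.snd c = 1 := by
      have hsum : q (false,false) + q (false,true) + q (true,false) + q (true,true) = 1 := by
        have := hq.2
        simp [Fintype.sum_prod_type, Fintype.sum_bool] at this; linarith
      simp only [pmfMap, pNF, bern, Fintype.sum_prod_type, Fintype.sum_bool]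
      norm_num [Prod.ext_iff]
      linear_combination hsum
    have := ent_le_two' (pmfMap (pNF ε q) Prod.snd) h1 h2 (by simp)
    linarith
  · -- feedback achieves 2
    simp only [mutInf, entOf, ent, pmfMap, pFB, bern, Fintype.sum_prod_type,
      Fintype.sum_bool]
    norm_num [Prod.ext_iff]
    ring_nf
    rw [logb_quarter']
    norm_num
  · -- strict increase
    intro h0 h1
    have hε1' : ε < 1 := h1
    have l1 : Real.logb 2 ε < 0 := Real.logb_neg (by norm_num) h0 hε1'
    have l2 : Real.logb 2 (1 - ε) < 0 := Real.logb_neg (by norm_num) (by linarith) (by linarith)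
    have : 0 < binH ε := by
      unfold binH
      nlinarith [l1, l2, h0, hε1']
    linarith
end

section
/- For the binary channel Y_1 = X_1 XOR Z_1 XOR Z_2, tilde{Y}_1 = Z_1, Y_2 = Z_2, with Z_1 ~ Bernoulli(epsilon_1) and Z_2 ~ Bernoulli(epsilon_2) independent: the maximum of H(Y^2) minus H_2(epsilon_1 * epsilon_2) over causally conditioned input distributions equals 1 + H_2(epsilon_2) - H_2(epsilon_1 * epsilon_2), where epsilon_1 * epsilon_2 = epsilon_1(1-epsilon_2)+(1-epsilon_1)epsilon_2. In particular, when epsilon_1 = 1/2 this upper bound equals H_2(epsilon_2) even though the true capacity-sum bound is 0. -/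
open scoped BigOperators

/-- Binary convolution `ε₁ * ε₂`. -/
noncomputable def bconv (a b : ℝ) : ℝ := a * (1 - b) + (1 - a) * b

/-- Joint law of (strategy `(X₁, A₂)`, noises `(Z₁,Z₂)`):  strategies distributed as `q`,
independent of `Z₁ ~ Bernoulli(ε₁)`, `Z₂ ~ Bernoulli(ε₂)`;  `X₂ = A₂(Z₁)`. -/
noncomputable def p8 (ε1 ε2 : ℝ) (q : Bool × (Bool → Bool) → ℝ) :
    (Bool × (Bool → Bool)) × (Bool × Bool) → ℝ :=
  fun ω => q ω.1 * bern ε1 ω.2.1 * bern ε2 ω.2.2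

lemma key_two (a b : ℝ) (ha : 0 ≤ a) (hb : 0 ≤ b) :
    -(a * Real.logb 2 a) - b * Real.logb 2 b ≤ (a + b) - (a + b) * Real.logb 2 (a + b) := by
  rcases eq_or_lt_of_le (add_nonneg ha hb) with h | h
  · have ha0 : a = 0 := by linarith
    have hb0 : b = 0 := by linarith
    simp [ha0, hb0]
  · have hc := Real.convexOn_mul_log.2 (Set.mem_Ici.mpr ha) (Set.mem_Ici.mpr hb)
      (by norm_num : (0:ℝ) ≤ 1/2) (by norm_num : (0:ℝ) ≤ 1/2) (by norm_num)
    simp only [smul_eq_mul] at hc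
    have hab : (1/2:ℝ)*a + (1/2)*b = (a+b)/2 := by ring
    rw [hab] at hc
    have hlg : Real.log ((a+b)/2) = Real.log (a+b) - Real.log 2 := by
      rw [Real.log_div (ne_of_gt h) two_ne_zero]
    rw [hlg] at hc
    have hL : 0 < Real.log 2 := Real.log_pos one_lt_two
    have key2 : (a+b)*Real.log (a+b) - (a+b)*Real.log 2 ≤ a*Real.log a + b*Real.log b := by
      nlinarith [hc]
    have hid : (a+b) - (a+b)*Real.logb 2 (a+b) - (-(a * Real.logb 2 a) - b * Real.logb 2 b)
        = (a*Real.log a + b*Real.log b - ((a+b)*Real.log (a+b) - (a+b)*Real.log 2)) / Real.log 2 := by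
      simp only [Real.logb]
      field_simp
      ring
    have hnn := div_nonneg (by linarith :
      (0:ℝ) ≤ a*Real.log a + b*Real.log b - ((a+b)*Real.log (a+b) - (a+b)*Real.log 2)) hL.le
    linarith [hid, hnn]

lemma mul_logb_half (x : ℝ) (hx : 0 ≤ x) : x * Real.logb 2 (x/2) = x * Real.logb 2 x - x := by
  rcases eq_or_lt_of_le hx with h | h
  · simp [← h]
  · rw [Real.logb_div (ne_of_gt h) two_ne_zero, Real.logb_self_eq_one one_lt_two]
    ring

lemma marg {Ω : Type*} [Fintype Ω] (p : Ω → ℝ) (f : Ω → Bool) (g : Ω → Bool) (y : Bool) :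
    pmfMap p (fun ω => (f ω, g ω)) (false, y) + pmfMap p (fun ω => (f ω, g ω)) (true, y)
      = pmfMap p g y := by
  unfold pmfMap
  rw [← Finset.sum_add_distrib]
  refine Finset.sum_congr rfl fun ω _ => ?_
  by_cases hg : g ω = y <;> cases hf : f ω <;> simp [hf, hg, Prod.ext_iff]

lemma margZ2 (ε1 ε2 : ℝ) (q : Bool × (Bool → Bool) → ℝ) (hq : ∑ s, q s = 1) (y : Bool) :
    pmfMap (p8 ε1 ε2 q) (fun ω => ω.2.2) y = bern ε2 y := by
  unfold pmfMap p8
  rw [Fintype.sum_prod_type]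
  have h : ∀ s : Bool × (Bool → Bool),
      (∑ z : Bool × Bool, if z.2 = y then q s * bern ε1 z.1 * bern ε2 z.2 else 0)
        = q s * bern ε2 y := by
    intro s
    rw [Fintype.sum_prod_type]
    cases y <;> simp [Fintype.sum_bool, bern] <;> ring
  rw [Finset.sum_congr rfl (fun s _ => h s), ← Finset.sum_mul, hq, one_mul]

lemma hr_unif (ε1 ε2 : ℝ) (y1 y2 : Bool) :
    pmfMap (p8 ε1 ε2 (fun _ => (1/8:ℝ)))
      (fun ω => (xor (xor ω.1.1 ω.2.1) ω.2.2, ω.2.2)) (y1, y2) = bern ε2 y2 / 2 := by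
  unfold pmfMap p8
  cases y1 <;> cases y2 <;>
    simp [Fintype.sum_prod_type, Fintype.sum_bool, Finset.sum_const, Fintype.card_fun, bern] <;>
    ring

/-- For `Y₁ = X₁ ⊕ Z₁ ⊕ Z₂`, `Y₂ = Z₂`: the maximum of `H(Y²) - H₂(ε₁*ε₂)` over
(randomized) encoding strategies equals `1 + H₂(ε₂) - H₂(ε₁*ε₂)`;  at `ε₁ = 1/2`
this equals `H₂(ε₂)`. -/
theorem stmt8 (ε1 ε2 : ℝ) (h1 : ε1 ∈ Set.Icc (0:ℝ) 1) (h2 : ε2 ∈ Set.Icc (0:ℝ) 1) :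
    IsGreatest {v : ℝ | ∃ q : Bool × (Bool → Bool) → ℝ, IsPMF q ∧
        v = entOf (p8 ε1 ε2 q) (fun ω => (xor (xor ω.1.1 ω.2.1) ω.2.2, ω.2.2))
              - binH (bconv ε1 ε2)}
      (1 + binH ε2 - binH (bconv ε1 ε2)) ∧
    (ε1 = 1/2 → 1 + binH ε2 - binH (bconv ε1 ε2) = binH ε2) := by
  obtain ⟨h2a, h2b⟩ := h2
  have hbern : ∀ ε, ε ∈ Set.Icc (0:ℝ) 1 → ∀ z : Bool, 0 ≤ bern ε z := by
    rintro ε ⟨hl, hu⟩ z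
    cases z <;> simp [bern] <;> linarith
  constructor
  · constructor
    · -- membership via uniform q
      refine ⟨fun _ => (1/8:ℝ), ⟨fun _ => by norm_num, ?_⟩, ?_⟩
      · norm_num [Finset.sum_const, Fintype.card_prod, Fintype.card_fun]
      · have hfun : pmfMap (p8 ε1 ε2 (fun _ => (1/8:ℝ)))
            (fun ω => (xor (xor ω.1.1 ω.2.1) ω.2.2, ω.2.2)) = fun c => bern ε2 c.2 / 2 :=
          funext fun c => hr_unif ε1 ε2 c.1 c.2
        unfold entOf ent
        rw [hfun]
        rw [Fintype.sum_prod_type]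
        simp only [Fintype.sum_bool, bern, binH]
        norm_num
        have e1 := mul_logb_half (1 - ε2) (by linarith)
        have e2 := mul_logb_half ε2 h2a
        have c1 : (1 - ε2)/2 * Real.logb 2 ((1-ε2)/2)
            = ((1-ε2) * Real.logb 2 (1-ε2) - (1-ε2))/2 := by linarith
        have c2 : ε2/2 * Real.logb 2 (ε2/2) = (ε2 * Real.logb 2 ε2 - ε2)/2 := by linarith
        linarith [c1, c2]
    · -- upper bound
      rintro v ⟨q, ⟨hq0, hq1⟩, rfl⟩
      have hrn : ∀ y, 0 ≤ pmfMap (p8 ε1 ε2 q)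
          (fun ω => (xor (xor ω.1.1 ω.2.1) ω.2.2, ω.2.2)) y := by
        intro y
        refine Finset.sum_nonneg fun ω _ => ?_
        split
        · exact mul_nonneg (mul_nonneg (hq0 _) (hbern ε1 h1 _)) (hbern ε2 ⟨h2a, h2b⟩ _)
        · exact le_refl 0
      have h0 : pmfMap (p8 ε1 ε2 q) (fun ω => (xor (xor ω.1.1 ω.2.1) ω.2.2, ω.2.2)) (false, false)
          + pmfMap (p8 ε1 ε2 q) (fun ω => (xor (xor ω.1.1 ω.2.1) ω.2.2, ω.2.2)) (true, false)
          = 1 - ε2 := by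
        have hm := marg (p8 ε1 ε2 q) (fun ω => xor (xor ω.1.1 ω.2.1) ω.2.2) (fun ω => ω.2.2) false
        rw [margZ2 ε1 ε2 q hq1] at hm
        simpa [bern] using hm
      have hT : pmfMap (p8 ε1 ε2 q) (fun ω => (xor (xor ω.1.1 ω.2.1) ω.2.2, ω.2.2)) (false, true)
          + pmfMap (p8 ε1 ε2 q) (fun ω => (xor (xor ω.1.1 ω.2.1) ω.2.2, ω.2.2)) (true, true)
          = ε2 := by
        have hm := marg (p8 ε1 ε2 q) (fun ω => xor (xor ω.1.1 ω.2.1) ω.2.2) (fun ω => ω.2.2) true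
        rw [margZ2 ε1 ε2 q hq1] at hm
        simpa [bern] using hm
      have hub : entOf (p8 ε1 ε2 q) (fun ω => (xor (xor ω.1.1 ω.2.1) ω.2.2, ω.2.2))
          ≤ 1 + binH ε2 := by
        unfold entOf ent
        rw [Fintype.sum_prod_type]
        simp only [Fintype.sum_bool]
        have k1 := key_two _ _ (hrn (false, false)) (hrn (true, false))
        rw [h0] at k1
        have k2 := key_two _ _ (hrn (false, true)) (hrn (true, true))
        rw [hT] at k2
        simp only [binH]
        linarith
      linarith
  · intro h
    subst h
    have hb : bconv (1/2) ε2 = 1/2 := by unfold bconv; ring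
    rw [hb]
    have hhalf : binH (1/2 : ℝ) = 1 := by
      unfold binH
      have : Real.logb 2 ((1:ℝ)/2) = -1 := by
        rw [one_div, Real.logb_inv, Real.logb_self_eq_one one_lt_two]
      norm_num [this]
    rw [hhalf]
    ring
end
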